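/- (Jump condition implies agreement of the traces along a connected interface.) Let d ≥ 2 and let Ω, Ω⁺, Ω⁻, Γ, n, y⁺, y⁻ be as in the interface setting with Γ connected. Suppose there exists a continuous map a : Γ → ℝ^d such that Dy⁺(x) = Dy⁻(x) + a(x) ⊗ n(x) for all x ∈ Γ, and suppose y⁺(x₀) = y⁻(x₀) for some x₀ ∈ Γ. Then y⁺(x) = y⁻(x) for all x ∈ Γ. -/

import Mathlib

/-!
On `Γ` the jump condition gives `D(y⁺ - y⁻) = a ⊗ n`, which annihilates the velocity of every
curve in `Γ` because `n` is normal to `Γ`. Near each of its points `Γ` is the image of a ball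
under a differentiable map into `Γ` (project onto the graph along the graph direction), so
`y⁺ - y⁻` composed with that map has zero derivative on the ball and is constant there. Hence
`y⁺ - y⁻` is locally constant on the connected set `Γ`, and it vanishes at `x₀`.
-/

open Metric Set MeasureTheory
open scoped RealInnerProductSpace NNReal

noncomputable section

/-- `ℝ^d` with the Euclidean structure. -/
abbrev Euc (d : ℕ) := EuclideanSpace ℝ (Fin d)

/-- Near `ξ`, the set `Γ` is the graph of a `C¹` function in a suitable Cartesian
coordinate system: there is a unit vector `ν` (the last coordinate direction) and a
`C¹` function `g` on the orthogonal hyperplane such that inside some ball around `ξ`,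
`Γ` consists exactly of the points whose `ν`-coordinate equals `g` of their
hyperplane coordinates. -/
def IsC1GraphAt (d : ℕ) (Γ : Set (Euc d)) (ξ : Euc d) : Prop :=
  ∃ r : ℝ, 0 < r ∧ ∃ ν : Euc d, ‖ν‖ = 1 ∧
    ∃ g : ((Submodule.span ℝ {ν})ᗮ : Submodule ℝ (Euc d)) → ℝ, ContDiff ℝ 1 g ∧
      Γ ∩ ball ξ r =
        {x ∈ ball ξ r | ⟪x, ν⟫ = g (Submodule.orthogonalProjectionOnto (Submodule.span ℝ {ν})ᗮ x)}

/-- A `(d-1)`-surface of class `C¹`: a relatively compact set, equal to its manifold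
interior (every point has an open neighbourhood in `Γ` homeomorphic to an open ball
in `ℝ^(d-1)`), which is locally the graph of a `C¹` function. -/
structure IsC1Surface (d : ℕ) (Γ : Set (Euc d)) : Prop where
  relCompact : IsCompact (closure Γ)
  locHomeo : ∀ ξ (hξ : ξ ∈ Γ), ∃ V : Set Γ, IsOpen V ∧ ⟨ξ, hξ⟩ ∈ V ∧
      Nonempty (V ≃ₜ (ball (0 : EuclideanSpace ℝ (Fin (d - 1))) 1 :
        Set (EuclideanSpace ℝ (Fin (d - 1)))))
  locGraph : ∀ ξ ∈ Γ, IsC1GraphAt d Γ ξ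

/-- A bounded domain of class `C¹`: open, connected, bounded, and near each boundary
point, in suitable Cartesian coordinates, `Ω` is the region above the graph of a `C¹`
function and `∂Ω` is the graph itself. -/
structure IsC1Domain (d : ℕ) (Ω : Set (Euc d)) : Prop where
  isOpen : IsOpen Ω
  isConnected : IsConnected Ω
  isBounded : Bornology.IsBounded Ω
  locGraph : ∀ ξ ∈ frontier Ω, ∃ r : ℝ, 0 < r ∧ ∃ ν : Euc d, ‖ν‖ = 1 ∧
    ∃ g : ((Submodule.span ℝ {ν})ᗮ : Submodule ℝ (Euc d)) → ℝ, ContDiff ℝ 1 g ∧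
      Ω ∩ ball ξ r =
        {x ∈ ball ξ r | g (Submodule.orthogonalProjectionOnto (Submodule.span ℝ {ν})ᗮ x) < ⟪x, ν⟫} ∧
      frontier Ω ∩ ball ξ r =
        {x ∈ ball ξ r | ⟪x, ν⟫ = g (Submodule.orthogonalProjectionOnto (Submodule.span ℝ {ν})ᗮ x)}

/-- The interface setting: `Ω` is a bounded `C¹` domain written as the disjoint union
`Ω = Ω⁺ ∪ Γ ∪ Ω⁻` of two disjoint open sets and a `C¹` interface
`Γ = Ω ∩ ∂Ω⁺ = Ω ∩ ∂Ω⁻`, and `n` is the continuous unit normal on `Γ`, outward with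
respect to `Ω⁺` (i.e. normal to every `C¹` curve in `Γ`, and pointing from `Ω⁺`
towards `Ω⁻`). -/
structure InterfaceSetting (d : ℕ) (Ω Ωp Ωm Γ : Set (Euc d)) (n : Euc d → Euc d) : Prop where
  dom : IsC1Domain d Ω
  openP : IsOpen Ωp
  openM : IsOpen Ωm
  disjointPM : Disjoint Ωp Ωm
  decomp : Ω = Ωp ∪ Γ ∪ Ωm
  interP : Γ = Ω ∩ frontier Ωp
  interM : Γ = Ω ∩ frontier Ωm
  surface : IsC1Surface d Γ
  n_cont : ContinuousOn n Γ
  n_unit : ∀ x ∈ Γ, ‖n x‖ = 1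
  n_normal : ∀ x ∈ Γ, ∀ γ : ℝ → Euc d, γ 0 = x → (∀ᶠ t in nhds (0 : ℝ), γ t ∈ Γ) →
      DifferentiableAt ℝ γ 0 → ⟪deriv γ 0, n x⟫ = 0
  n_outward : ∀ x ∈ Γ, ∀ᶠ t in nhdsWithin (0 : ℝ) (Ioi 0),
      x - t • n x ∈ Ωp ∧ x + t • n x ∈ Ωm

/-- `y ∈ C¹(cl A, ℝ^d)`: `y` coincides on a neighbourhood of `cl A` with a continuously
differentiable map, i.e. `y` is `C¹` on an open set containing `cl A`. -/
def C1OnClosure (d : ℕ) (y : Euc d → Euc d) (A : Set (Euc d)) : Prop :=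
  ∃ U : Set (Euc d), IsOpen U ∧ closure A ⊆ U ∧ ContDiffOn ℝ 1 y U

theorem C1OnClosure.differentiableAt {d : ℕ} {y : Euc d → Euc d} {A : Set (Euc d)}
    (hy : C1OnClosure d y A) {x : Euc d} (hx : x ∈ closure A) : DifferentiableAt ℝ y x := by
  obtain ⟨U, hUo, hAU, hyU⟩ := hy
  exact (hyU.differentiableOn one_ne_zero).differentiableAt (hUo.mem_nhds (hAU hx))

/-- The retraction moves each point in the graph direction `ν` onto the graph:
`L x = x + (g (P x) - ⟪x, ν⟫) • ν`. -/
theorem IsC1GraphAt.exists_retraction {d : ℕ} {Γ : Set (Euc d)} {ξ : Euc d}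
    (hgr : IsC1GraphAt d Γ ξ) (hξ : ξ ∈ Γ) :
    ∃ L : Euc d → Euc d, Differentiable ℝ L ∧
      ∃ ε > 0, MapsTo L (ball ξ ε) Γ ∧ EqOn L id (Γ ∩ ball ξ ε) := by
  obtain ⟨r, hr, ν, hν, g, hg, hgraph⟩ := hgr
  set P := Submodule.orthogonalProjectionOnto (Submodule.span ℝ {ν})ᗮ
  set L : Euc d → Euc d := fun x => x + (g (P x) - ⟪x, ν⟫) • ν
  have hPν : P ν = 0 := Submodule.orthogonalProjectionOnto_apply_of_mem_orthogonal
    ((Submodule.span ℝ {ν}).le_orthogonal_orthogonal (Submodule.mem_span_singleton_self ν))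
  have hPL : ∀ x, P (L x) = P x := fun x => by simp [L, hPν]
  have hνν : ⟪ν, ν⟫ = 1 := by rw [real_inner_self_eq_norm_sq, hν, one_pow]
  have hLν : ∀ x, ⟪L x, ν⟫ = g (P x) := fun x => by
    simp only [L, inner_add_left, real_inner_smul_left, hνν]; ring
  have hΓ : ∀ x ∈ ball ξ r, x ∈ Γ ↔ ⟪x, ν⟫ = g (P x) := fun x hx => by
    have h := congrArg (x ∈ ·) hgraph
    simp only [mem_inter_iff, mem_ofPred_eq, hx, and_true, true_and] at h
    exact Iff.of_eq h
  have hfix : EqOn L id (Γ ∩ ball ξ r) := fun x hx => by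
    simp [L, ← (hΓ x hx.2).1 hx.1]
  have hLdiff : Differentiable ℝ L := by
    have hgP : Differentiable ℝ (fun x => g (P x)) :=
      (hg.differentiable one_ne_zero).comp P.differentiable
    exact differentiable_id.add
      ((hgP.sub (differentiable_id.inner ℝ (differentiable_const ν))).smul_const ν)
  obtain ⟨ε, hε, hεr⟩ := Metric.continuousAt_iff.mp hLdiff.continuous.continuousAt r hr
  rw [hfix ⟨hξ, mem_ball_self hr⟩] at hεr
  refine ⟨L, hLdiff, min ε r, lt_min hε hr, fun x hx => ?_, hfix.mono ?_⟩
  · have hLx : L x ∈ ball ξ r := hεr (lt_of_lt_of_le hx (min_le_left _ _))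
    exact (hΓ _ hLx).2 (by rw [hLν, hPL])
  · exact inter_subset_inter_right _ (ball_subset_ball (min_le_right _ _))

section Tangential

variable {E F : Type*} [NormedAddCommGroup E] [NormedSpace ℝ E]
  [NormedAddCommGroup F] [NormedSpace ℝ F]

def HasZeroTangentialFDeriv (Γ : Set E) (f : E → F) : Prop :=
  ∀ x ∈ Γ, DifferentiableAt ℝ f x ∧
    ∀ γ : ℝ → E, γ 0 = x → (∀ᶠ t in nhds (0 : ℝ), γ t ∈ Γ) → DifferentiableAt ℝ γ 0 →
      fderiv ℝ f x (deriv γ 0) = 0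

theorem HasZeroTangentialFDeriv.fderiv_comp_eq_zero {G : Type*} [NormedAddCommGroup G]
    [NormedSpace ℝ G] {Γ : Set E} {f : E → F} (hf : HasZeroTangentialFDeriv Γ f)
    {U : Set G} (hU : IsOpen U) {L : G → E} (hLU : MapsTo L U Γ) {p : G} (hp : p ∈ U)
    (hL : DifferentiableAt ℝ L p) : fderiv ℝ (f ∘ L) p = 0 := by
  obtain ⟨hfd, hfγ⟩ := hf (L p) (hLU hp)
  ext w
  set γ : ℝ → E := fun s => L (p + s • w)
  have hline : HasDerivAt (fun s : ℝ => p + s • w) w 0 := by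
    simpa using ((hasDerivAt_id (0 : ℝ)).smul_const w).const_add p
  have hγ : HasDerivAt γ (fderiv ℝ L p w) 0 :=
    hL.hasFDerivAt.comp_hasDerivAt_of_eq (0 : ℝ) hline (by simp)
  have hγU : ∀ᶠ s in nhds (0 : ℝ), γ s ∈ Γ := by
    have : ∀ᶠ s in nhds (0 : ℝ), p + s • w ∈ U :=
      hline.continuousAt.preimage_mem_nhds (by simpa using hU.mem_nhds hp)
    exact this.mono fun s hs => hLU hs
  have := hfγ γ (by simp [γ]) hγU hγ.differentiableAt
  rw [hγ.deriv] at this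
  rw [fderiv_comp p hfd hL]
  simpa using this

end Tangential

theorem HasZeroTangentialFDeriv.isLocallyConstant {d : ℕ} {Γ : Set (Euc d)}
    {f : Euc d → Euc d} (hf : HasZeroTangentialFDeriv Γ f)
    (hΓ : ∀ ξ ∈ Γ, IsC1GraphAt d Γ ξ) : IsLocallyConstant fun x : Γ => f x := by
  rw [IsLocallyConstant.iff_exists_open]
  rintro ⟨ξ, hξ⟩
  obtain ⟨L, hL, ε, hε, hLΓ, hLfix⟩ := (hΓ ξ hξ).exists_retraction hξ
  have hconst : ∀ x ∈ ball ξ ε, ∀ y ∈ ball ξ ε, f (L x) = f (L y) :=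
    fun x hx y hy => isOpen_ball.is_const_of_fderiv_eq_zero (f := f ∘ L)
      (convex_ball ξ ε).isPreconnected
      (fun p hp => ((hf (L p) (hLΓ hp)).1.comp p hL.differentiableAt).differentiableWithinAt)
      (fun p hp => hf.fderiv_comp_eq_zero isOpen_ball hLΓ hp hL.differentiableAt) hx hy
  refine ⟨Subtype.val ⁻¹' ball ξ ε, isOpen_ball.preimage continuous_subtype_val,
    mem_preimage.mpr (mem_ball_self hε), fun x hxε => ?_⟩
  have := hconst x hxε ξ (mem_ball_self hε)
  rwa [hLfix ⟨x.2, hxε⟩, hLfix ⟨hξ, mem_ball_self hε⟩] at this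

theorem statement11_general (d : ℕ)
    (Ω Ωp Ωm Γ : Set (Euc d)) (n : Euc d → Euc d)
    (hset : InterfaceSetting d Ω Ωp Ωm Γ n)
    (hconn : IsConnected Γ)
    (yp ym : Euc d → Euc d)
    (hyp : C1OnClosure d yp Ωp) (hym : C1OnClosure d ym Ωm)
    (a : Euc d → Euc d)
    (hjump : ∀ x ∈ Γ, ∀ v : Euc d,
      fderiv ℝ yp x v = fderiv ℝ ym x v + ⟪n x, v⟫ • a x)
    (x0 : Euc d) (hx0 : x0 ∈ Γ) (htrace : yp x0 = ym x0) :
    ∀ x ∈ Γ, yp x = ym x := by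
  have hflat : HasZeroTangentialFDeriv Γ (yp - ym) := by
    intro x hx
    have hdp := hyp.differentiableAt (frontier_subset_closure (hset.interP ▸ hx).2)
    have hdm := hym.differentiableAt (frontier_subset_closure (hset.interM ▸ hx).2)
    refine ⟨hdp.sub hdm, fun γ hγ0 hγΓ hγ => ?_⟩
    rw [fderiv_sub hdp hdm, sub_apply, hjump x hx, add_sub_cancel_left,
      real_inner_comm, hset.n_normal x hx γ hγ0 hγΓ hγ, zero_smul]
  have : ConnectedSpace Γ := isConnected_iff_connectedSpace.mp hconn
  intro x hx
  have := (hflat.isLocallyConstant hset.surface.locGraph).apply_eq_of_preconnectedSpace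
    ⟨x, hx⟩ ⟨x0, hx0⟩
  simpa [htrace, sub_eq_zero] using this

/-- jump condition implies agreement of the traces along a connected
interface. If `Γ` is connected, the jump condition holds on `Γ`, and `y⁺ = y⁻` at one
point of `Γ`, then `y⁺ = y⁻` on all of `Γ`. -/
theorem statement11 (d : ℕ) (hd : 2 ≤ d)
    (Ω Ωp Ωm Γ : Set (Euc d)) (n : Euc d → Euc d)
    (hset : InterfaceSetting d Ω Ωp Ωm Γ n)
    (hconn : IsConnected Γ)
    (yp ym : Euc d → Euc d)
    (hyp : C1OnClosure d yp Ωp) (hym : C1OnClosure d ym Ωm)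
    (a : Euc d → Euc d) (ha : ContinuousOn a Γ)
    (hjump : ∀ x ∈ Γ, ∀ v : Euc d,
      fderiv ℝ yp x v = fderiv ℝ ym x v + ⟪n x, v⟫ • a x)
    (x0 : Euc d) (hx0 : x0 ∈ Γ) (htrace : yp x0 = ym x0) :
    ∀ x ∈ Γ, yp x = ym x :=
  statement11_general d Ω Ωp Ωm Γ n hset hconn yp ym hyp hym a hjump x0 hx0 htrace

end
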